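/- Discrete minimum principle (Lemma 3.2): suppose Assumption (3.7) holds and N ≥ N₀. If W is a mesh function on {x₀,…,x_N}×{t₀,…,t_M} with W(x_i,t_n) ≥ 0 at all discrete boundary points (i = 0, i = N, or n = 0) and L^{N,M} W(x_i,t_n) ≤ 0 for all interior mesh points (1 ≤ i ≤ N−1, 1 ≤ n ≤ M), then W(x_i,t_n) ≥ 0 at every mesh point. -/
import Mathlib


open Set

noncomputable section

/-- `sup`-norm of `|g|` over `Q̄ = [-1,1] × [0,T]`. -/
def supAbs (T : ℝ) (g : ℝ → ℝ → ℝ) : ℝ :=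
  sSup ((fun q : ℝ × ℝ => |g q.1 q.2|) '' (Set.Icc (-1:ℝ) 1 ×ˢ Set.Icc (0:ℝ) T))

/-- spatial step `h_i = x_i - x_{i-1}`. -/
def hs (x : ℕ → ℝ) (i : ℕ) : ℝ := x i - x (i - 1)

/-- `ĥ_i = h_i + h_{i+1} = x_{i+1} - x_{i-1}`. -/
def hhat (x : ℕ → ℝ) (i : ℕ) : ℝ := x (i + 1) - x (i - 1)

/-- half-mesh average `g_{i+1/2}^n`. -/
def avgP (g : ℝ → ℝ → ℝ) (x : ℕ → ℝ) (tn : ℕ → ℝ) (i n : ℕ) : ℝ :=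
  (g (x (i + 1)) (tn n) + g (x i) (tn n)) / 2

/-- half-mesh average `g_{i-1/2}^n`. -/
def avgM (g : ℝ → ℝ → ℝ) (x : ℕ → ℝ) (tn : ℕ → ℝ) (i n : ℕ) : ℝ :=
  (g (x (i - 1)) (tn n) + g (x i) (tn n)) / 2

/-- second central difference `δ²_x v_i^n`. -/
def Dsq (x : ℕ → ℝ) (v : ℕ → ℕ → ℝ) (i n : ℕ) : ℝ :=
  2 * ((v (i + 1) n - v i n) / hs x (i + 1) - (v i n - v (i - 1) n) / hs x i) / hhat x i

/-- central difference operator `L_cen`. -/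
def Lcen (ε Δt : ℝ) (a b d : ℝ → ℝ → ℝ) (x : ℕ → ℝ) (tn : ℕ → ℝ)
    (v : ℕ → ℕ → ℝ) (i n : ℕ) : ℝ :=
  ε * Dsq x v i n + a (x i) (tn n) * ((v (i + 1) n - v (i - 1) n) / hhat x i)
    - d (x i) (tn n) * ((v i n - v i (n - 1)) / Δt) - b (x i) (tn n) * v i n

/-- midpoint upwind operator `L_{mu,+}`. -/
def LmuP (ε Δt : ℝ) (a b d : ℝ → ℝ → ℝ) (x : ℕ → ℝ) (tn : ℕ → ℝ)
    (v : ℕ → ℕ → ℝ) (i n : ℕ) : ℝ :=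
  ε * Dsq x v i n + avgP a x tn i n * ((v (i + 1) n - v i n) / hs x (i + 1))
    - avgP d x tn i n *
        (((v (i + 1) n + v i n) / 2 - (v (i + 1) (n - 1) + v i (n - 1)) / 2) / Δt)
    - avgP b x tn i n * ((v (i + 1) n + v i n) / 2)

/-- midpoint upwind operator `L_{mu,-}`. -/
def LmuM (ε Δt : ℝ) (a b d : ℝ → ℝ → ℝ) (x : ℕ → ℝ) (tn : ℕ → ℝ)
    (v : ℕ → ℕ → ℝ) (i n : ℕ) : ℝ :=
  ε * Dsq x v i n + avgM a x tn i n * ((v i n - v (i - 1) n) / hs x i)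
    - avgM d x tn i n *
        (((v (i - 1) n + v i n) / 2 - (v (i - 1) (n - 1) + v i (n - 1)) / 2) / Δt)
    - avgM b x tn i n * ((v (i - 1) n + v i n) / 2)

/-- the hybrid difference operator `L^{N,M}`. -/
def Lhyb (ε Δt : ℝ) (a b d : ℝ → ℝ → ℝ) (x : ℕ → ℝ) (tn : ℕ → ℝ) (N : ℕ)
    (v : ℕ → ℕ → ℝ) (i n : ℕ) : ℝ :=
  if |a (x i) (tn n) * hs x i| < 2 * ε then Lcen ε Δt a b d x tn v i n
  else if i ≤ N / 2 then LmuP ε Δt a b d x tn v i n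
  else LmuM ε Δt a b d x tn v i n



lemma supAbs_bound (T : ℝ) (g : ℝ → ℝ → ℝ)
    (hg : ContinuousOn (fun q : ℝ × ℝ => g q.1 q.2) (Set.Icc (-1:ℝ) 1 ×ˢ Set.Icc 0 T))
    {X t : ℝ} (hX : X ∈ Set.Icc (-1:ℝ) 1) (ht : t ∈ Set.Icc (0:ℝ) T) :
    g X t ≤ supAbs T g := by
  have hmem : ((X,t) : ℝ × ℝ) ∈ Set.Icc (-1:ℝ) 1 ×ˢ Set.Icc (0:ℝ) T := ⟨hX, ht⟩
  have hcomp : IsCompact (Set.Icc (-1:ℝ) 1 ×ˢ Set.Icc (0:ℝ) T) := isCompact_Icc.prod isCompact_Icc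
  have hbdd : BddAbove ((fun q : ℝ × ℝ => |g q.1 q.2|) '' (Set.Icc (-1:ℝ) 1 ×ˢ Set.Icc (0:ℝ) T)) :=
    (hcomp.image_of_continuousOn hg.abs).bddAbove
  calc g X t ≤ |g X t| := le_abs_self _
    _ ≤ _ := le_csSup hbdd ⟨(X,t), hmem, rfl⟩

lemma hhat_eq (x : ℕ → ℝ) (i : ℕ) : hhat x i = hs x i + hs x (i+1) := by
  unfold hhat hs
  simp only [Nat.add_sub_cancel]
  ring

set_option maxHeartbeats 4000000 in
/-- Lemma 3.2 (discrete minimum principle for the hybrid scheme). -/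
theorem stmt_7
    (T ε Δt α α₀ β γ τ₀ L τ h H κ : ℝ) (p N M N₀ : ℕ)
    (a b d a₀ : ℝ → ℝ → ℝ) (x : ℕ → ℝ) (tn : ℕ → ℝ)
    (hT : 0 < T) (hε : ε ∈ Set.Ioc (0:ℝ) 1)
    (hM : 0 < M) (hΔt : Δt = T / M) (htn : ∀ n : ℕ, tn n = n * Δt)
    (hN4 : 4 ∣ N)
    (hp1 : 1 ≤ p) (hpodd : Odd p)
    (hacont : ContinuousOn (fun q : ℝ × ℝ => a q.1 q.2) (Set.Icc (-1:ℝ) 1 ×ˢ Set.Icc 0 T))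
    (hbcont : ContinuousOn (fun q : ℝ × ℝ => b q.1 q.2) (Set.Icc (-1:ℝ) 1 ×ˢ Set.Icc 0 T))
    (hdcont : ContinuousOn (fun q : ℝ × ℝ => d q.1 q.2) (Set.Icc (-1:ℝ) 1 ×ˢ Set.Icc 0 T))
    (haform : ∀ X ∈ Set.Icc (-1:ℝ) 1, ∀ t ∈ Set.Icc (0:ℝ) T, a X t = -(a₀ X t) * X ^ p)
    (hα₀ : 0 < α₀)
    (ha₀ : ∀ X ∈ Set.Icc (-1:ℝ) 1, ∀ t ∈ Set.Icc (0:ℝ) T, α₀ ≤ a₀ X t)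
    (hβ : 0 < β)
    (hbpos : ∀ X ∈ Set.Icc (-1:ℝ) 1, ∀ t ∈ Set.Icc (0:ℝ) T, β ≤ b X t)
    (hγ : 0 ≤ γ)
    (hdpos : ∀ X ∈ Set.Icc (-1:ℝ) 1, ∀ t ∈ Set.Icc (0:ℝ) T, γ ≤ d X t)
    (hα : α ∈ Set.Ioo (0:ℝ) α₀) (hτ₀ : 1 / α ≤ τ₀)
    (hL : 0 < L) (hLe : Real.exp (-L) ≤ L / N) (hLlog : L ≤ Real.log N)
    (hτ : τ = min (1/4 : ℝ) (τ₀ * ε * L))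
    (hh : h = 4 * τ / N) (hH : H = 4 * (1 - τ) / N)
    (hx1 : ∀ i : ℕ, i ≤ N / 4 → x i = -1 + i * h)
    (hx2 : ∀ i : ℕ, N / 4 ≤ i → i ≤ 3 * (N / 4) →
      x i = -1 + τ + ((i : ℝ) - (N : ℝ) / 4) * H)
    (hx3 : ∀ i : ℕ, 3 * (N / 4) ≤ i → i ≤ N → x i = 1 - ((N : ℝ) - (i : ℝ)) * h)
    (hκ : 0 < κ)
    (hκP : ∀ i n : ℕ, 1 ≤ i → i ≤ N / 2 → 1 ≤ n → n ≤ M →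
      ¬ |a (x i) (tn n) * hs x i| < 2 * ε → κ ≤ avgP a x tn i n)
    (hκM : ∀ i n : ℕ, N / 2 < i → i ≤ N - 1 → 1 ≤ n → n ≤ M →
      ¬ |a (x i) (tn n) * hs x i| < 2 * ε → κ ≤ -avgM a x tn i n)
    (h37a : 2 * (supAbs T d / Δt + supAbs T b) ≤ (N₀ : ℝ) * κ)
    (h37b : 2 * τ₀ * supAbs T a < (N₀ : ℝ) / Real.log N₀)
    (hNN₀ : N₀ ≤ N)
    (W : ℕ → ℕ → ℝ)
    (hWbd : ∀ i n : ℕ, i ≤ N → n ≤ M → (i = 0 ∨ i = N ∨ n = 0) → 0 ≤ W i n)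
    (hLW : ∀ i n : ℕ, 1 ≤ i → i ≤ N - 1 → 1 ≤ n → n ≤ M →
      Lhyb ε Δt a b d x tn N W i n ≤ 0) :
    ∀ i n : ℕ, i ≤ N → n ≤ M → 0 ≤ W i n := by
  -- ## basic positivity facts
  have hεpos : 0 < ε := hε.1
  have hαpos : 0 < α := hα.1
  have hMR : (0:ℝ) < M := by exact_mod_cast hM
  have hΔtpos : 0 < Δt := by rw [hΔt]; positivity
  have hNpos : 0 < N := by
    by_contra hc
    have h0 : N = 0 := by omega
    rw [h0] at hLe
    simp at hLe
    linarith only [Real.exp_pos (-L), hLe]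
  obtain ⟨k, hk⟩ := hN4
  have hk1 : 1 ≤ k := by omega
  have hNR : (0:ℝ) < N := by exact_mod_cast hNpos
  have hNne : (N:ℝ) ≠ 0 := ne_of_gt hNR
  have hkR : (0:ℝ) < (k:ℝ) := by exact_mod_cast hk1
  have hNkR : (N:ℝ) = 4 * (k:ℝ) := by exact_mod_cast congrArg (Nat.cast : ℕ → ℝ) hk
  have hτ₀pos : 0 < τ₀ := lt_of_lt_of_le (by positivity) hτ₀
  have hτpos : 0 < τ := by rw [hτ]; exact lt_min (by norm_num) (by positivity)
  have hτ14 : τ ≤ 1/4 := by rw [hτ]; exact min_le_left _ _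
  have hhpos : 0 < h := by rw [hh]; positivity
  have hHpos : 0 < H := by rw [hH]; apply div_pos (by linarith only [hτ14]) hNR
  have hhH : h ≤ H := by
    rw [hh, hH]; exact (div_le_div_iff_of_pos_right hNR).mpr (by linarith only [hτ14])
  have hH4N : H ≤ 4 / N := by
    rw [hH]; exact (div_le_div_iff_of_pos_right hNR).mpr (by linarith only [hτpos])
  have hh4N : h ≤ 4 / N := le_trans hhH hH4N
  -- ## mesh step identities
  have hs1 : ∀ i : ℕ, 1 ≤ i → i ≤ k → hs x i = h := by
    intro i hi1 hik
    unfold hs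
    rw [hx1 i (by omega), hx1 (i-1) (by omega), Nat.cast_sub hi1, Nat.cast_one]
    ring
  have hs2 : ∀ i : ℕ, k+1 ≤ i → i ≤ 3*k → hs x i = H := by
    intro i hi1 hik
    unfold hs
    rw [hx2 i (by omega) (by omega), hx2 (i-1) (by omega) (by omega),
      Nat.cast_sub (by omega : 1 ≤ i), Nat.cast_one]
    ring
  have hs3 : ∀ i : ℕ, 3*k+1 ≤ i → i ≤ N → hs x i = h := by
    intro i hi1 hik
    unfold hs
    rw [hx3 i (by omega) (by omega), hx3 (i-1) (by omega) (by omega),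
      Nat.cast_sub (by omega : 1 ≤ i), Nat.cast_one]
    ring
  have hs_pos : ∀ i : ℕ, 1 ≤ i → i ≤ N → 0 < hs x i := by
    intro i hi1 hiN
    rcases le_or_gt i k with h' | h'
    · rw [hs1 i hi1 h']; exact hhpos
    rcases le_or_gt i (3*k) with h'' | h''
    · rw [hs2 i (by omega) h'']; exact hHpos
    · rw [hs3 i (by omega) hiN]; exact hhpos
  have hs_le : ∀ i : ℕ, 1 ≤ i → i ≤ N → hs x i ≤ 4 / N := by
    intro i hi1 hiN
    rcases le_or_gt i k with h' | h'
    · rw [hs1 i hi1 h']; exact hh4N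
    rcases le_or_gt i (3*k) with h'' | h''
    · rw [hs2 i (by omega) h'']; exact hH4N
    · rw [hs3 i (by omega) hiN]; exact hh4N
  have hs_dec : ∀ i : ℕ, 2*k < i → i ≤ N - 1 → hs x (i+1) ≤ hs x i := by
    intro i hi1 hiN
    rcases le_or_gt (i+1) (3*k) with h' | h'
    · rw [hs2 (i+1) (by omega) h', hs2 i (by omega) (by omega)]
    rcases le_or_gt i (3*k) with h'' | h''
    · rw [hs3 (i+1) (by omega) (by omega), hs2 i (by omega) h'']; exact hhH
    · rw [hs3 (i+1) (by omega) (by omega), hs3 i (by omega) (by omega)]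
  -- ## mesh point bounds
  have x0 : x 0 = -1 := by rw [hx1 0 (by omega)]; norm_num
  have xN : x N = 1 := by rw [hx3 N (by omega) le_rfl]; ring
  have xstep : ∀ i : ℕ, 1 ≤ i → i ≤ N → x (i-1) ≤ x i := by
    intro i hi1 hiN
    have := hs_pos i hi1 hiN
    unfold hs at this; linarith only [this]
  have xmono : ∀ j : ℕ, j ≤ N → ∀ i : ℕ, i ≤ j → x i ≤ x j := by
    intro j
    induction j with
    | zero =>
        intro _ i hi
        have hi0 : i = 0 := by omega
        rw [hi0]
    | succ j ih =>
        intro hj i hi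
        rcases Nat.lt_or_ge i (j+1) with h' | h'
        · have h1 := xstep (j+1) (by omega) hj
          simp only [Nat.add_sub_cancel] at h1
          exact le_trans (ih (by omega) i (by omega)) h1
        · have hieq : i = j + 1 := by omega
          rw [hieq]
  have xlow : ∀ i : ℕ, i ≤ N → -1 ≤ x i := by
    intro i hi
    have := xmono i hi 0 (Nat.zero_le _)
    rwa [x0] at this
  have xup : ∀ i : ℕ, i ≤ N → x i ≤ 1 := by
    intro i hi
    have := xmono N le_rfl i hi
    rwa [xN] at this
  have x_mem : ∀ i : ℕ, i ≤ N → x i ∈ Set.Icc (-1:ℝ) 1 := fun i hi => ⟨xlow i hi, xup i hi⟩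
  have xhalf : x (2*k) = 0 := by
    rw [hx2 (2*k) (by omega) (by omega), hH, hNkR]
    have hc2 : ((2*k:ℕ):ℝ) = 2*(k:ℝ) := by push_cast; ring
    rw [hc2]
    field_simp
    ring
  have xle0 : ∀ i : ℕ, i ≤ 2*k → x i ≤ 0 := by
    intro i hi
    have := xmono (2*k) (by omega) i hi
    rwa [xhalf] at this
  have xge0 : ∀ i : ℕ, 2*k ≤ i → i ≤ N → 0 ≤ x i := by
    intro i hi hiN
    have := xmono i hiN (2*k) hi
    rwa [xhalf] at this
  have t_mem : ∀ m : ℕ, m ≤ M → tn m ∈ Set.Icc (0:ℝ) T := by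
    intro m hm
    rw [htn m]
    constructor
    · positivity
    · have hmM : (m:ℝ) ≤ M := by exact_mod_cast hm
      have : (m:ℝ) * Δt ≤ M * Δt := mul_le_mul_of_nonneg_right hmM hΔtpos.le
      calc (m:ℝ) * Δt ≤ M * Δt := this
        _ = T := by rw [hΔt]; field_simp
  -- ## sign of a on mesh
  have ha_sgn : ∀ i m : ℕ, i ≤ N → m ≤ M →
      (i ≤ 2*k → 0 ≤ a (x i) (tn m)) ∧ (2*k ≤ i → a (x i) (tn m) ≤ 0) := by
    intro i m hiN hm
    have hxm := x_mem i hiN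
    have htm := t_mem m hm
    rw [haform (x i) hxm (tn m) htm]
    have ha0p : 0 < a₀ (x i) (tn m) := lt_of_lt_of_le hα₀ (ha₀ _ hxm _ htm)
    constructor
    · intro hi
      have hx0 : x i ≤ 0 := xle0 i hi
      have hxp : x i ^ p ≤ 0 := Odd.pow_nonpos hpodd hx0
      linarith only [mul_nonneg ha0p.le (neg_nonneg.mpr hxp)]
    · intro hi
      have hx0 : 0 ≤ x i := xge0 i hi hiN
      have hxp : 0 ≤ x i ^ p := pow_nonneg hx0 p
      linarith only [mul_nonneg ha0p.le hxp]
  -- ## sup norm bounds on mesh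
  have hd_le : ∀ i m : ℕ, i ≤ N → m ≤ M → d (x i) (tn m) ≤ supAbs T d :=
    fun i m hi hm => supAbs_bound T d hdcont (x_mem i hi) (t_mem m hm)
  have hb_le : ∀ i m : ℕ, i ≤ N → m ≤ M → b (x i) (tn m) ≤ supAbs T b :=
    fun i m hi hm => supAbs_bound T b hbcont (x_mem i hi) (t_mem m hm)
  have hb_ge : ∀ i m : ℕ, i ≤ N → m ≤ M → β ≤ b (x i) (tn m) :=
    fun i m hi hm => hbpos _ (x_mem i hi) _ (t_mem m hm)
  have hd_ge : ∀ i m : ℕ, i ≤ N → m ≤ M → 0 ≤ d (x i) (tn m) :=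
    fun i m hi hm => le_trans hγ (hdpos _ (x_mem i hi) _ (t_mem m hm))
  -- (3.7) coefficient bound
  have hcoef : supAbs T d / Δt + supAbs T b ≤ κ * N / 2 := by
    have h1 : (N₀:ℝ) ≤ N := by exact_mod_cast hNN₀
    linarith only [h37a, mul_le_mul_of_nonneg_right h1 hκ.le]
  -- ## main induction on the time level
  have hdiv2 : N / 2 = 2 * k := by omega
  have main : ∀ m : ℕ, m ≤ M → ∀ i : ℕ, i ≤ N → 0 ≤ W i m := by
    intro m
    induction m with
    | zero => intro _ i hi; exact hWbd i 0 hi (by omega) (Or.inr (Or.inr rfl))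
    | succ nn ih =>
      intro hn
      by_contra hneg
      push_neg at hneg
      obtain ⟨ibad, hibadN, hibad⟩ := hneg
      obtain ⟨i₀, hi₀mem, hmin⟩ := Finset.exists_min_image (Finset.range (N+1))
        (fun j => W j (nn+1)) ⟨ibad, Finset.mem_range.mpr (by omega)⟩
      simp only [Finset.mem_range] at hi₀mem
      have hminW : ∀ j : ℕ, j ≤ N → W i₀ (nn+1) ≤ W j (nn+1) := fun j hj =>
        hmin j (Finset.mem_range.mpr (by omega))
      have hm0 : W i₀ (nn+1) < 0 := lt_of_le_of_lt (hminW ibad hibadN) hibad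
      have hi₀1 : 1 ≤ i₀ := by
        by_contra hcon
        have h0 : i₀ = 0 := by omega
        rw [h0] at hm0
        exact absurd (hWbd 0 (nn+1) (by omega) hn (Or.inl rfl)) (not_le.mpr hm0)
      have hi₀N : i₀ ≤ N - 1 := by
        by_contra hcon
        have h0 : i₀ = N := by omega
        rw [h0] at hm0
        exact absurd (hWbd N (nn+1) le_rfl hn (Or.inr (Or.inl rfl))) (not_le.mpr hm0)
      have hIH : ∀ j : ℕ, j ≤ N → 0 ≤ W j nn := fun j hj => ih (by omega) j hj
      have hLWi := hLW i₀ (nn+1) hi₀1 hi₀N (by omega) hn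
      have hW1 : W i₀ (nn+1) ≤ W (i₀+1) (nn+1) := hminW (i₀+1) (by omega)
      have hW2 : W i₀ (nn+1) ≤ W (i₀-1) (nn+1) := hminW (i₀-1) (by omega)
      have hP0 : 0 ≤ W i₀ nn := hIH i₀ (by omega)
      have hP1 : 0 ≤ W (i₀+1) nn := hIH (i₀+1) (by omega)
      have hP2 : 0 ≤ W (i₀-1) nn := hIH (i₀-1) (by omega)
      have h1pos : 0 < hs x i₀ := hs_pos i₀ hi₀1 (by omega)
      have h2pos : 0 < hs x (i₀+1) := hs_pos (i₀+1) (by omega) (by omega)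
      have hhsum : 0 < hs x i₀ + hs x (i₀+1) := by linarith only [h1pos, h2pos]
      unfold Lhyb at hLWi
      split_ifs at hLWi with hcen hup
      · -- central scheme case
        have hAh1 : a (x i₀) (tn (nn+1)) * hs x i₀ < 2*ε := lt_of_le_of_lt (le_abs_self _) hcen
        have hAh1' : -(2*ε) < a (x i₀) (tn (nn+1)) * hs x i₀ := neg_lt_of_abs_lt hcen
        have hc2 : 0 ≤ 2*ε / hs x (i₀+1) + a (x i₀) (tn (nn+1)) := by
          rcases le_or_gt i₀ (2*k) with hhalf | hhalf
          · have hA0 : 0 ≤ a (x i₀) (tn (nn+1)) := (ha_sgn i₀ (nn+1) (by omega) hn).1 hhalf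
            have hq := div_pos (by linarith only [hεpos] : (0:ℝ) < 2*ε) h2pos
            linarith only [hq, hA0]
          · have hdec := hs_dec i₀ (by omega) hi₀N
            have hA0 : a (x i₀) (tn (nn+1)) ≤ 0 := (ha_sgn i₀ (nn+1) (by omega) hn).2 (by omega)
            have hmul : a (x i₀) (tn (nn+1)) * hs x i₀ ≤ a (x i₀) (tn (nn+1)) * hs x (i₀+1) :=
              mul_le_mul_of_nonpos_left hdec hA0
            have h2' : -(2*ε) < a (x i₀) (tn (nn+1)) * hs x (i₀+1) := lt_of_lt_of_le hAh1' hmul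
            have : -(a (x i₀) (tn (nn+1))) ≤ 2*ε / hs x (i₀+1) := by
              rw [le_div_iff₀ h2pos]; linarith only [h2']
            linarith only [this]
        have hc1 : 0 ≤ 2*ε / hs x i₀ - a (x i₀) (tn (nn+1)) := by
          rcases le_or_gt i₀ (2*k) with hhalf | hhalf
          · have : a (x i₀) (tn (nn+1)) ≤ 2*ε / hs x i₀ := by
              rw [le_div_iff₀ h1pos]; linarith only [hAh1]
            linarith only [this]
          · have hA0 : a (x i₀) (tn (nn+1)) ≤ 0 := (ha_sgn i₀ (nn+1) (by omega) hn).2 (by omega)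
            have hq := div_pos (by linarith only [hεpos] : (0:ℝ) < 2*ε) h1pos
            linarith only [hq, hA0]
        have hd0 : 0 ≤ d (x i₀) (tn (nn+1)) := hd_ge i₀ (nn+1) (by omega) hn
        have hb0 : β ≤ b (x i₀) (tn (nn+1)) := hb_ge i₀ (nn+1) (by omega) hn
        have e1 : ε * Dsq x W i₀ (nn+1)
            + a (x i₀) (tn (nn+1)) * ((W (i₀+1) (nn+1) - W (i₀-1) (nn+1)) / hhat x i₀)
            = ((2*ε / hs x (i₀+1) + a (x i₀) (tn (nn+1))) * (W (i₀+1) (nn+1) - W i₀ (nn+1))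
              + (2*ε / hs x i₀ - a (x i₀) (tn (nn+1))) * (W (i₀-1) (nn+1) - W i₀ (nn+1)))
              / (hs x i₀ + hs x (i₀+1)) := by
          unfold Dsq
          rw [hhat_eq x i₀]
          field_simp
          ring
        have t1 : 0 ≤ ε * Dsq x W i₀ (nn+1)
            + a (x i₀) (tn (nn+1)) * ((W (i₀+1) (nn+1) - W (i₀-1) (nn+1)) / hhat x i₀) := by
          rw [e1]
          apply div_nonneg _ hhsum.le
          have u1 := mul_nonneg hc2 (by linarith only [hW1] : (0:ℝ) ≤ W (i₀+1) (nn+1) - W i₀ (nn+1))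
          have u2 := mul_nonneg hc1 (by linarith only [hW2] : (0:ℝ) ≤ W (i₀-1) (nn+1) - W i₀ (nn+1))
          linarith only [u1, u2]
        have t2 : d (x i₀) (tn (nn+1)) * ((W i₀ (nn+1) - W i₀ ((nn+1)-1)) / Δt) ≤ 0 := by
          simp only [Nat.add_sub_cancel]
          apply mul_nonpos_of_nonneg_of_nonpos hd0
          apply div_nonpos_of_nonpos_of_nonneg (by linarith only [hm0, hP0]) hΔtpos.le
        have t3 : b (x i₀) (tn (nn+1)) * W i₀ (nn+1) < 0 :=
          mul_neg_of_pos_of_neg (by linarith only [hb0, hβ]) hm0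
        have key : 0 < Lcen ε Δt a b d x tn W i₀ (nn+1) := by
          unfold Lcen
          linarith only [t1, t2, t3]
        exact absurd hLWi (not_le.mpr key)
      · -- midpoint upwind (+) case
        have hκA : κ ≤ avgP a x tn i₀ (nn+1) := hκP i₀ (nn+1) hi₀1 hup (by omega) hn hcen
        have hDle : avgP d x tn i₀ (nn+1) ≤ supAbs T d := by
          unfold avgP
          have u1 := hd_le (i₀+1) (nn+1) (by omega) hn
          have u2 := hd_le i₀ (nn+1) (by omega) hn
          linarith only [u1, u2]
        have hBle : avgP b x tn i₀ (nn+1) ≤ supAbs T b := by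
          unfold avgP
          have u1 := hb_le (i₀+1) (nn+1) (by omega) hn
          have u2 := hb_le i₀ (nn+1) (by omega) hn
          linarith only [u1, u2]
        have hD0 : 0 ≤ avgP d x tn i₀ (nn+1) := by
          unfold avgP
          have u1 := hd_ge (i₀+1) (nn+1) (by omega) hn
          have u2 := hd_ge i₀ (nn+1) (by omega) hn
          linarith only [u1, u2]
        have hB0 : β ≤ avgP b x tn i₀ (nn+1) := by
          unfold avgP
          have u1 := hb_ge (i₀+1) (nn+1) (by omega) hn
          have u2 := hb_ge i₀ (nn+1) (by omega) hn
          linarith only [u1, u2]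
        have hcoefP : (avgP d x tn i₀ (nn+1) / Δt + avgP b x tn i₀ (nn+1)) / 2
            ≤ avgP a x tn i₀ (nn+1) / hs x (i₀+1) := by
          have s1 : avgP d x tn i₀ (nn+1) / Δt ≤ supAbs T d / Δt :=
            (div_le_div_iff_of_pos_right hΔtpos).mpr hDle
          have s3 : κ * N / 4 ≤ κ / hs x (i₀+1) := by
            rw [le_div_iff₀ h2pos]
            have hm := mul_le_mul_of_nonneg_left (hs_le (i₀+1) (by omega) (by omega))
              (by positivity : (0:ℝ) ≤ κ * N / 4)
            calc κ * N / 4 * hs x (i₀+1) ≤ κ * N / 4 * (4 / N) := hm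
              _ = κ := by field_simp
          have s4 : κ / hs x (i₀+1) ≤ avgP a x tn i₀ (nn+1) / hs x (i₀+1) :=
            (div_le_div_iff_of_pos_right h2pos).mpr hκA
          linarith only [s1, s3, s4, hBle, hcoef]
        have e0 : Dsq x W i₀ (nn+1)
            = 2 * ((W (i₀+1) (nn+1) - W i₀ (nn+1)) / hs x (i₀+1)
              + (W (i₀-1) (nn+1) - W i₀ (nn+1)) / hs x i₀) / (hs x i₀ + hs x (i₀+1)) := by
          unfold Dsq
          rw [hhat_eq x i₀]
          field_simp
          ring
        have tδ : 0 ≤ ε * Dsq x W i₀ (nn+1) := by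
          apply mul_nonneg hεpos.le
          rw [e0]
          apply div_nonneg _ hhsum.le
          have u1 : 0 ≤ (W (i₀+1) (nn+1) - W i₀ (nn+1)) / hs x (i₀+1) :=
            div_nonneg (by linarith only [hW1]) h2pos.le
          have u2 : 0 ≤ (W (i₀-1) (nn+1) - W i₀ (nn+1)) / hs x i₀ :=
            div_nonneg (by linarith only [hW2]) h1pos.le
          linarith only [u1, u2]
        have e2 : LmuP ε Δt a b d x tn W i₀ (nn+1)
            = ε * Dsq x W i₀ (nn+1)
              + avgP a x tn i₀ (nn+1) / hs x (i₀+1) * (W (i₀+1) (nn+1) - W i₀ (nn+1))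
              + avgP d x tn i₀ (nn+1) * ((W (i₀+1) nn + W i₀ nn) / 2) / Δt
              - ((avgP d x tn i₀ (nn+1) / Δt + avgP b x tn i₀ (nn+1)) * W i₀ (nn+1)
                + (avgP d x tn i₀ (nn+1) / Δt + avgP b x tn i₀ (nn+1)) / 2
                  * (W (i₀+1) (nn+1) - W i₀ (nn+1))) := by
          unfold LmuP
          simp only [Nat.add_sub_cancel]
          field_simp
          ring
        have t2 : (avgP d x tn i₀ (nn+1) / Δt + avgP b x tn i₀ (nn+1)) / 2
            * (W (i₀+1) (nn+1) - W i₀ (nn+1))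
            ≤ avgP a x tn i₀ (nn+1) / hs x (i₀+1) * (W (i₀+1) (nn+1) - W i₀ (nn+1)) :=
          mul_le_mul_of_nonneg_right hcoefP (by linarith only [hW1])
        have t3 : 0 ≤ avgP d x tn i₀ (nn+1) * ((W (i₀+1) nn + W i₀ nn) / 2) / Δt :=
          div_nonneg (mul_nonneg hD0 (by linarith only [hP0, hP1, hP2])) hΔtpos.le
        have hcpos : 0 < avgP d x tn i₀ (nn+1) / Δt + avgP b x tn i₀ (nn+1) := by
          have hq := div_nonneg hD0 hΔtpos.le
          linarith only [hq, hB0, hβ]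
        have t4 : (avgP d x tn i₀ (nn+1) / Δt + avgP b x tn i₀ (nn+1)) * W i₀ (nn+1) < 0 :=
          mul_neg_of_pos_of_neg hcpos hm0
        have key : 0 < LmuP ε Δt a b d x tn W i₀ (nn+1) := by
          rw [e2]
          linarith only [tδ, t2, t3, t4]
        exact absurd hLWi (not_le.mpr key)
      · -- midpoint upwind (-) case
        have hκA : κ ≤ -avgM a x tn i₀ (nn+1) := hκM i₀ (nn+1) (by omega) hi₀N (by omega) hn hcen
        have hDle : avgM d x tn i₀ (nn+1) ≤ supAbs T d := by
          unfold avgM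
          have u1 := hd_le (i₀-1) (nn+1) (by omega) hn
          have u2 := hd_le i₀ (nn+1) (by omega) hn
          linarith only [u1, u2]
        have hBle : avgM b x tn i₀ (nn+1) ≤ supAbs T b := by
          unfold avgM
          have u1 := hb_le (i₀-1) (nn+1) (by omega) hn
          have u2 := hb_le i₀ (nn+1) (by omega) hn
          linarith only [u1, u2]
        have hD0 : 0 ≤ avgM d x tn i₀ (nn+1) := by
          unfold avgM
          have u1 := hd_ge (i₀-1) (nn+1) (by omega) hn
          have u2 := hd_ge i₀ (nn+1) (by omega) hn
          linarith only [u1, u2]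
        have hB0 : β ≤ avgM b x tn i₀ (nn+1) := by
          unfold avgM
          have u1 := hb_ge (i₀-1) (nn+1) (by omega) hn
          have u2 := hb_ge i₀ (nn+1) (by omega) hn
          linarith only [u1, u2]
        have hcoefM : (avgM d x tn i₀ (nn+1) / Δt + avgM b x tn i₀ (nn+1)) / 2
            ≤ -avgM a x tn i₀ (nn+1) / hs x i₀ := by
          have s1 : avgM d x tn i₀ (nn+1) / Δt ≤ supAbs T d / Δt :=
            (div_le_div_iff_of_pos_right hΔtpos).mpr hDle
          have s3 : κ * N / 4 ≤ κ / hs x i₀ := by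
            rw [le_div_iff₀ h1pos]
            have hm := mul_le_mul_of_nonneg_left (hs_le i₀ hi₀1 (by omega))
              (by positivity : (0:ℝ) ≤ κ * N / 4)
            calc κ * N / 4 * hs x i₀ ≤ κ * N / 4 * (4 / N) := hm
              _ = κ := by field_simp
          have s4 : κ / hs x i₀ ≤ -avgM a x tn i₀ (nn+1) / hs x i₀ :=
            (div_le_div_iff_of_pos_right h1pos).mpr hκA
          linarith only [s1, s3, s4, hBle, hcoef]
        have e0 : Dsq x W i₀ (nn+1)
            = 2 * ((W (i₀+1) (nn+1) - W i₀ (nn+1)) / hs x (i₀+1)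
              + (W (i₀-1) (nn+1) - W i₀ (nn+1)) / hs x i₀) / (hs x i₀ + hs x (i₀+1)) := by
          unfold Dsq
          rw [hhat_eq x i₀]
          field_simp
          ring
        have tδ : 0 ≤ ε * Dsq x W i₀ (nn+1) := by
          apply mul_nonneg hεpos.le
          rw [e0]
          apply div_nonneg _ hhsum.le
          have u1 : 0 ≤ (W (i₀+1) (nn+1) - W i₀ (nn+1)) / hs x (i₀+1) :=
            div_nonneg (by linarith only [hW1]) h2pos.le
          have u2 : 0 ≤ (W (i₀-1) (nn+1) - W i₀ (nn+1)) / hs x i₀ :=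
            div_nonneg (by linarith only [hW2]) h1pos.le
          linarith only [u1, u2]
        have e2 : LmuM ε Δt a b d x tn W i₀ (nn+1)
            = ε * Dsq x W i₀ (nn+1)
              + (-avgM a x tn i₀ (nn+1)) / hs x i₀ * (W (i₀-1) (nn+1) - W i₀ (nn+1))
              + avgM d x tn i₀ (nn+1) * ((W (i₀-1) nn + W i₀ nn) / 2) / Δt
              - ((avgM d x tn i₀ (nn+1) / Δt + avgM b x tn i₀ (nn+1)) * W i₀ (nn+1)
                + (avgM d x tn i₀ (nn+1) / Δt + avgM b x tn i₀ (nn+1)) / 2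
                  * (W (i₀-1) (nn+1) - W i₀ (nn+1))) := by
          unfold LmuM
          simp only [Nat.add_sub_cancel]
          field_simp
          ring
        have t2 : (avgM d x tn i₀ (nn+1) / Δt + avgM b x tn i₀ (nn+1)) / 2
            * (W (i₀-1) (nn+1) - W i₀ (nn+1))
            ≤ -avgM a x tn i₀ (nn+1) / hs x i₀ * (W (i₀-1) (nn+1) - W i₀ (nn+1)) :=
          mul_le_mul_of_nonneg_right hcoefM (by linarith only [hW2])
        have t3 : 0 ≤ avgM d x tn i₀ (nn+1) * ((W (i₀-1) nn + W i₀ nn) / 2) / Δt :=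
          div_nonneg (mul_nonneg hD0 (by linarith only [hP0, hP1, hP2])) hΔtpos.le
        have hcpos : 0 < avgM d x tn i₀ (nn+1) / Δt + avgM b x tn i₀ (nn+1) := by
          have hq := div_nonneg hD0 hΔtpos.le
          linarith only [hq, hB0, hβ]
        have t4 : (avgM d x tn i₀ (nn+1) / Δt + avgM b x tn i₀ (nn+1)) * W i₀ (nn+1) < 0 :=
          mul_neg_of_pos_of_neg hcpos hm0
        have key : 0 < LmuM ε Δt a b d x tn W i₀ (nn+1) := by
          rw [e2]
          linarith only [tδ, t2, t3, t4]
        exact absurd hLWi (not_le.mpr key)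
  intro i m hi hm
  exact main m hm i hi


end
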